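/- Let H be a complex Hilbert space and d a positive integer. The function D^ρ(S, T) = (1/2)(ρ(S − T) + ρ(T − S)) defines a metric on B(H)^d, where ρ is the Toeplitz modulus and subtraction of d-tuples is entrywise: D^ρ is nonnegative, vanishes exactly when S = T, is symmetric, and satisfies the triangle inequality. -/

import Mathlib

open scoped ComplexOrder

noncomputable section

variable {H : Type*} [NormedAddCommGroup H] [InnerProductSpace ℂ H] [CompleteSpace H]

/-- The `(i, j)` entry of the `(d+1) × (d+1)` block Toeplitz operator matrix associated to a
`d`-tuple `T` of bounded operators on `H`, with diagonal entries `α • 1`: it is `α • 1` if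
`i = j`, `T_{i-j}` if `i > j`, and `(T_{j-i})*` if `i < j`. -/
def tEntry {d : ℕ} (T : Fin d → H →L[ℂ] H) (α : ℂ) (i j : Fin (d + 1)) : H →L[ℂ] H :=
  if _h1 : (i : ℕ) = (j : ℕ) then α • (1 : H →L[ℂ] H)
  else if _h2 : (j : ℕ) < (i : ℕ) then
    T ⟨(i : ℕ) - (j : ℕ) - 1, by have := i.isLt; omega⟩
  else
    ContinuousLinearMap.adjoint (T ⟨(j : ℕ) - (i : ℕ) - 1, by have := j.isLt; omega⟩)

/-- Positivity of a block operator matrix `M`, expressed through its quadratic form on the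
direct sum of copies of `H`: for every vector `x = (x_i)`, `∑ i j, ⟪M i j (x j), x i⟫ ≥ 0`. -/
def IsPosBlockMatrix {ι : Type*} [Fintype ι] (M : ι → ι → (H →L[ℂ] H)) : Prop :=
  ∀ x : ι → H, 0 ≤ ∑ i, ∑ j, (inner ℂ (M i j (x j)) (x i) : ℂ)

/-- A `d`-tuple of operators is Toeplitz-contractive if its block Toeplitz operator matrix
(with 1's on the diagonal) is a positive operator on `⊕_1^{d+1} H`. -/
def ToeplitzContractive {d : ℕ} (T : Fin d → H →L[ℂ] H) : Prop :=
  IsPosBlockMatrix (tEntry T 1)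

/-- The Toeplitz modulus `ρ(T)` of a `d`-tuple `T`: the infimum of the `α ∈ ℝ₊` for which the
block Toeplitz operator matrix `𝒯_α` (with `α • 1` on the diagonal) is positive. -/
def toeplitzModulus {d : ℕ} (T : Fin d → H →L[ℂ] H) : ℝ :=
  sInf {α : ℝ | 0 ≤ α ∧ IsPosBlockMatrix (tEntry T (α : ℂ))}

/-- The symmetrised Toeplitz-modulus distance
`D^ρ(S, T) = (ρ(S − T) + ρ(T − S)) / 2` on `d`-tuples of operators. -/
def toeplitzDist {d : ℕ} (S T : Fin d → H →L[ℂ] H) : ℝ :=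
  (toeplitzModulus (fun k => S k - T k) + toeplitzModulus (fun k => T k - S k)) / 2


/-! ### Auxiliary lemmas -/

section Aux

variable {d : ℕ}

lemma tEntry_diag (T : Fin d → H →L[ℂ] H) (α : ℂ) (i : Fin (d+1)) :
    tEntry T α i i = α • 1 := by
  unfold tEntry; rw [dif_pos rfl]

lemma tEntry_adjoint (T : Fin d → H →L[ℂ] H) (α : ℝ) (i j : Fin (d+1)) :
    ContinuousLinearMap.adjoint (tEntry T (α:ℂ) i j) = tEntry T (α:ℂ) j i := by
  unfold tEntry
  rcases lt_trichotomy (i:ℕ) (j:ℕ) with h | h | h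
  · rw [dif_neg (by omega), dif_neg (by omega), dif_neg (by omega), dif_pos h,
      ContinuousLinearMap.adjoint_adjoint]
  · rw [dif_pos h, dif_pos h.symm, ← ContinuousLinearMap.star_eq_adjoint, star_smul, star_one]
    norm_num
  · rw [dif_neg (by omega), dif_pos h, dif_neg (by omega), dif_neg (by omega)]

lemma tEntry_norm_le (T : Fin d → H →L[ℂ] H) (α : ℂ) {i j : Fin (d+1)}
    (h : (i : ℕ) ≠ (j : ℕ)) : ‖tEntry T α i j‖ ≤ ∑ k, ‖T k‖ := by
  unfold tEntry
  rw [dif_neg h]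
  rcases lt_or_gt_of_ne h with h2 | h2
  · rw [dif_neg (by omega)]
    rw [show ContinuousLinearMap.adjoint (T ⟨(j:ℕ) - (i:ℕ) - 1, by have := j.isLt; omega⟩)
        = (ContinuousLinearMap.adjoint : (H →L[ℂ] H) ≃ₗᵢ⋆[ℂ] (H →L[ℂ] H)) _ from rfl,
      LinearIsometryEquiv.norm_map]
    exact Finset.single_le_sum (fun k _ => norm_nonneg _) (Finset.mem_univ _)
  · rw [dif_pos h2]
    exact Finset.single_le_sum (fun k _ => norm_nonneg _) (Finset.mem_univ _)

lemma tEntry_add (S T : Fin d → H →L[ℂ] H) (α β : ℝ) (i j : Fin (d+1)) :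
    tEntry (fun k => S k + T k) ((α + β : ℝ) : ℂ) i j
      = tEntry S (α:ℂ) i j + tEntry T (β:ℂ) i j := by
  unfold tEntry
  split_ifs with h1 h2
  · push_cast
    rw [add_smul]
  · rfl
  · exact map_add _ _ _

lemma conj_blockSum (M : Fin (d+1) → Fin (d+1) → (H →L[ℂ] H)) (x : Fin (d+1) → H)
    (hM : ∀ i j, ContinuousLinearMap.adjoint (M i j) = M j i) :
    (starRingEnd ℂ) (∑ i, ∑ j, (inner ℂ (M i j (x j)) (x i) : ℂ))
      = ∑ i, ∑ j, (inner ℂ (M i j (x j)) (x i) : ℂ) := by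
  rw [map_sum]
  calc ∑ i, (starRingEnd ℂ) (∑ j, (inner ℂ (M i j (x j)) (x i) : ℂ))
      = ∑ i, ∑ j, (inner ℂ (M j i (x i)) (x j) : ℂ) := by
        refine Finset.sum_congr rfl fun i _ => ?_
        rw [map_sum]
        refine Finset.sum_congr rfl fun j _ => ?_
        rw [inner_conj_symm, ← ContinuousLinearMap.adjoint_inner_left, hM]
    _ = _ := Finset.sum_comm

lemma blockEntry_re_lower (M : Fin (d+1) → Fin (d+1) → (H →L[ℂ] H)) (x : Fin (d+1) → H)
    (C α : ℝ) (hC : 0 ≤ C) (i j : Fin (d+1))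
    (hdiag : ∀ i, M i i = (α:ℂ) • 1) (hoff : ∀ i j, i ≠ j → ‖M i j‖ ≤ C) :
    (if i = j then α * ‖x i‖^2 else 0) - C * (‖x i‖ * ‖x j‖)
      ≤ (inner ℂ (M i j (x j)) (x i) : ℂ).re := by
  by_cases h : i = j
  · subst h
    rw [if_pos rfl, hdiag]
    have e1 : ((α:ℂ) • (1 : H →L[ℂ] H)) (x i) = (α:ℂ) • (x i) := rfl
    rw [e1, inner_smul_left, Complex.conj_ofReal, inner_self_eq_norm_sq_to_K]
    have := mul_nonneg hC (mul_self_nonneg ‖x i‖)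
    simp only [Complex.mul_re, Complex.ofReal_re, Complex.ofReal_im, RCLike.ofReal_re,
      Complex.re_ofNat, Complex.im_ofNat, pow_two, Complex.mul_im]
    norm_num
    nlinarith
  · rw [if_neg h]
    have h1 : ‖(inner ℂ (M i j (x j)) (x i) : ℂ)‖ ≤ C * (‖x i‖ * ‖x j‖) := by
      calc ‖(inner ℂ (M i j (x j)) (x i) : ℂ)‖ ≤ ‖M i j (x j)‖ * ‖x i‖ := norm_inner_le_norm _ _
        _ ≤ (‖M i j‖ * ‖x j‖) * ‖x i‖ := by
            gcongr; exact (M i j).le_opNorm _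
        _ ≤ (C * ‖x j‖) * ‖x i‖ := by gcongr; exact hoff i j h
        _ = C * (‖x i‖ * ‖x j‖) := by ring
    have h2 : -‖(inner ℂ (M i j (x j)) (x i) : ℂ)‖ ≤ (inner ℂ (M i j (x j)) (x i) : ℂ).re := by
      have := Complex.abs_re_le_norm (inner ℂ (M i j (x j)) (x i) : ℂ)
      exact (abs_le.mp this).1
    linarith

lemma sum_lower_nonneg (x : Fin (d+1) → H) (C α : ℝ) (hC : 0 ≤ C)
    (hα : ((d:ℝ)+1) * C ≤ α) (g : Fin (d+1) → Fin (d+1) → ℝ)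
    (hg : ∀ i j, (if i = j then α * ‖x i‖^2 else 0) - C * (‖x i‖ * ‖x j‖) ≤ g i j) :
    0 ≤ ∑ i, ∑ j, g i j := by
  have key : ∑ i, ∑ j, ((if i = j then α * ‖x i‖^2 else 0) - C * (‖x i‖ * ‖x j‖))
      ≤ ∑ i, ∑ j, g i j :=
    Finset.sum_le_sum fun i _ => Finset.sum_le_sum fun j _ => hg i j
  refine le_trans ?_ key
  have e1 : ∀ i : Fin (d+1), ∑ j, ((if i = j then α * ‖x i‖^2 else 0) - C * (‖x i‖ * ‖x j‖))
      = α * ‖x i‖^2 - C * (‖x i‖ * ∑ j, ‖x j‖) := by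
    intro i
    rw [Finset.sum_sub_distrib, Finset.sum_ite_eq, if_pos (Finset.mem_univ i)]
    congr 1
    simp [Finset.mul_sum]
  simp only [e1]
  rw [Finset.sum_sub_distrib, ← Finset.mul_sum, ← Finset.mul_sum, ← Finset.sum_mul]
  have cs : (∑ i, ‖x i‖)^2 ≤ ((d:ℝ)+1) * ∑ i, ‖x i‖^2 := by
    have := sq_sum_le_card_mul_sum_sq (s := (Finset.univ : Finset (Fin (d+1))))
      (f := fun i => ‖x i‖)
    simpa using this
  have hss : 0 ≤ ∑ i, ‖x i‖^2 := Finset.sum_nonneg fun i _ => sq_nonneg _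
  nlinarith [sq_nonneg (∑ i, ‖x i‖)]

lemma isPos_big (T : Fin d → H →L[ℂ] H) :
    IsPosBlockMatrix (tEntry T (((((d:ℝ)+1) * ∑ k, ‖T k‖ : ℝ)) : ℂ)) := by
  intro x
  set C : ℝ := ∑ k, ‖T k‖ with hCdef
  have hC : 0 ≤ C := Finset.sum_nonneg fun _ _ => norm_nonneg _
  set α : ℝ := ((d:ℝ)+1) * C with hαdef
  have hconj := conj_blockSum (tEntry T (α:ℂ)) x (tEntry_adjoint T α)
  rw [Complex.le_def]
  constructor
  · simp only [Complex.zero_re]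
    rw [Complex.re_sum]
    have : ∀ i : Fin (d+1), (∑ j, (inner ℂ (tEntry T (α:ℂ) i j (x j)) (x i) : ℂ)).re
        = ∑ j, (inner ℂ (tEntry T (α:ℂ) i j (x j)) (x i) : ℂ).re := fun i => Complex.re_sum _ _
    simp only [this]
    refine sum_lower_nonneg x C α hC le_rfl _ fun i j => ?_
    refine blockEntry_re_lower (tEntry T (α:ℂ)) x C α hC i j
      (fun i => tEntry_diag T (α:ℂ) i) fun i j hne => ?_
    exact tEntry_norm_le T (α:ℂ) fun h => hne (Fin.ext h)
  · simp only [Complex.zero_im]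
    exact (Complex.conj_eq_iff_im.mp hconj).symm

end Aux


section Aux2

variable {d : ℕ}

lemma norm_le_of_isPos {d : ℕ} (T : Fin d → H →L[ℂ] H) {α : ℝ} (h0 : 0 ≤ α)
    (hpos : IsPosBlockMatrix (tEntry T (α:ℂ))) (k : Fin d) : ‖T k‖ ≤ α := by
  refine (T k).opNorm_le_bound h0 fun u => ?_
  set v := T k u with hv
  set i₀ : Fin (d+1) := ⟨0, by omega⟩ with hi₀
  set i₁ : Fin (d+1) := ⟨(k:ℕ)+1, by have := k.isLt; omega⟩ with hi₁
  have hne : i₀ ≠ i₁ := by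
    intro h
    have : (0:ℕ) = (k:ℕ)+1 := congrArg Fin.val h
    omega
  -- the four entries
  have hM00 : tEntry T (α:ℂ) i₀ i₀ = (α:ℂ) • 1 := by unfold tEntry; rw [dif_pos rfl]
  have hM11 : tEntry T (α:ℂ) i₁ i₁ = (α:ℂ) • 1 := by unfold tEntry; rw [dif_pos rfl]
  have hM10 : tEntry T (α:ℂ) i₁ i₀ = T k := by
    unfold tEntry
    rw [dif_neg (by simp [hi₀, hi₁]), dif_pos (by simp [hi₀, hi₁])]
    congr 1
  have hM01 : tEntry T (α:ℂ) i₀ i₁ = ContinuousLinearMap.adjoint (T k) := by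
    unfold tEntry
    rw [dif_neg (by simp [hi₀, hi₁]), dif_neg (by simp [hi₀, hi₁])]
    congr 1
  -- the key inequality, for every real t
  have key : ∀ t : ℝ, 0 ≤ α * ‖u‖^2 + α * t^2 * ‖v‖^2 - 2 * t * ‖v‖^2 := by
    intro t
    set x : Fin (d+1) → H := fun i => if i = i₀ then u else if i = i₁ then (-(t:ℂ)) • v else 0
      with hx
    have hx0 : x i₀ = u := by simp [hx]
    have hx1 : x i₁ = (-(t:ℂ)) • v := by simp [hx, hne.symm]
    have hxo : ∀ i, i ≠ i₀ → i ≠ i₁ → x i = 0 := by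
      intro i h1 h2; simp [hx, h1, h2]
    have hsum : ∀ F : Fin (d+1) → ℂ, (∀ i, i ≠ i₀ → i ≠ i₁ → F i = 0) →
        ∑ i, F i = F i₀ + F i₁ := by
      intro F hF
      rw [← Finset.sum_pair hne]
      symm
      apply Finset.sum_subset (Finset.subset_univ _)
      intro i _ hi
      simp only [Finset.mem_insert, Finset.mem_singleton, not_or] at hi
      exact hF i hi.1 hi.2
    have hS := hpos x
    have hinner0 : ∀ i M, (inner ℂ ((M : H →L[ℂ] H) (x i)) (x i₀) : ℂ)
        = inner ℂ (M (x i)) u := by intro i M; rw [hx0]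
    -- collapse inner sums
    have hrow : ∀ i : Fin (d+1), ∑ j, (inner ℂ (tEntry T (α:ℂ) i j (x j)) (x i) : ℂ)
        = inner ℂ (tEntry T (α:ℂ) i i₀ (x i₀)) (x i) + inner ℂ (tEntry T (α:ℂ) i i₁ (x i₁)) (x i) := by
      intro i
      refine hsum _ fun j h1 h2 => ?_
      rw [hxo j h1 h2, map_zero, inner_zero_left]
    have hcol : ∑ i, ((inner ℂ (tEntry T (α:ℂ) i i₀ (x i₀)) (x i) : ℂ)
          + inner ℂ (tEntry T (α:ℂ) i i₁ (x i₁)) (x i))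
        = ((inner ℂ (tEntry T (α:ℂ) i₀ i₀ (x i₀)) (x i₀) : ℂ)
            + inner ℂ (tEntry T (α:ℂ) i₀ i₁ (x i₁)) (x i₀))
          + ((inner ℂ (tEntry T (α:ℂ) i₁ i₀ (x i₀)) (x i₁) : ℂ)
            + inner ℂ (tEntry T (α:ℂ) i₁ i₁ (x i₁)) (x i₁)) := by
      refine hsum _ fun i h1 h2 => ?_
      rw [hxo i h1 h2, inner_zero_right, inner_zero_right, add_zero]
    rw [show (∑ i, ∑ j, (inner ℂ (tEntry T (α:ℂ) i j (x j)) (x i) : ℂ))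
        = ∑ i, ((inner ℂ (tEntry T (α:ℂ) i i₀ (x i₀)) (x i) : ℂ)
            + inner ℂ (tEntry T (α:ℂ) i i₁ (x i₁)) (x i))
      from Finset.sum_congr rfl fun i _ => hrow i, hcol] at hS
    rw [hM00, hM01, hM10, hM11, hx0, hx1] at hS
    -- evaluate the four inner products
    have e00 : (inner ℂ (((α:ℂ) • (1 : H →L[ℂ] H)) u) u : ℂ) = ((α * ‖u‖^2 : ℝ) : ℂ) := by
      show (inner ℂ ((α:ℂ) • u) u : ℂ) = _
      rw [inner_smul_left, Complex.conj_ofReal, inner_self_eq_norm_sq_to_K]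
      apply Complex.ext <;> simp [← Complex.ofReal_pow]
    have e11 : (inner ℂ (((α:ℂ) • (1 : H →L[ℂ] H)) ((-(t:ℂ)) • v)) ((-(t:ℂ)) • v) : ℂ)
        = ((α * t^2 * ‖v‖^2 : ℝ) : ℂ) := by
      show (inner ℂ ((α:ℂ) • ((-(t:ℂ)) • v)) ((-(t:ℂ)) • v) : ℂ) = _
      rw [inner_smul_left, inner_smul_left, inner_smul_right, inner_self_eq_norm_sq_to_K]
      apply Complex.ext <;> simp [← Complex.ofReal_pow] <;> ring
    have e10 : (inner ℂ (T k u) ((-(t:ℂ)) • v) : ℂ) = ((-(t * ‖v‖^2) : ℝ) : ℂ) := by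
      rw [← hv, inner_smul_right, inner_self_eq_norm_sq_to_K]
      apply Complex.ext <;> simp [← Complex.ofReal_pow] <;> ring
    have e01 : (inner ℂ ((ContinuousLinearMap.adjoint (T k)) ((-(t:ℂ)) • v)) u : ℂ)
        = ((-(t * ‖v‖^2) : ℝ) : ℂ) := by
      rw [map_smul, inner_smul_left, ContinuousLinearMap.adjoint_inner_left, ← hv,
        inner_self_eq_norm_sq_to_K]
      apply Complex.ext <;> simp [← Complex.ofReal_pow] <;> ring
    rw [e00, e11, e10, e01] at hS
    have : (0:ℂ) ≤ ((α * ‖u‖^2 + α * t^2 * ‖v‖^2 - 2 * (t * ‖v‖^2) : ℝ) : ℂ) := by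
      convert hS using 1
      push_cast
      ring
    have := (Complex.le_def.mp this).1
    simp only [Complex.ofReal_re, Complex.zero_re] at this
    linarith
  -- now extract the operator-norm bound
  by_cases hvz : ‖v‖ = 0
  · rw [hvz]
    exact mul_nonneg h0 (norm_nonneg u)
  · have hvpos : 0 < ‖v‖ := lt_of_le_of_ne (norm_nonneg v) (Ne.symm hvz)
    rcases eq_or_lt_of_le h0 with h | h
    · exfalso
      have := key 1
      rw [← h] at this
      nlinarith
    · have hk := key (1/α)
      have hα : α ≠ 0 := ne_of_gt h
      have e1 : α * (1/α)^2 * ‖v‖^2 = ‖v‖^2 / α := by field_simp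
      have e2 : 2 * (1/α) * ‖v‖^2 = 2 * (‖v‖^2 / α) := by ring
      rw [e1, e2] at hk
      have h2 : ‖v‖^2 / α ≤ α * ‖u‖^2 := by linarith
      have h2' : ‖v‖^2 ≤ α * ‖u‖^2 * α := (div_le_iff₀ h).mp h2
      nlinarith [norm_nonneg u, norm_nonneg v, mul_nonneg h0 (norm_nonneg u),
        sq_nonneg (‖v‖ - α * ‖u‖), sq_nonneg (‖v‖ + α * ‖u‖)]

def toepSet (T : Fin d → H →L[ℂ] H) : Set ℝ :=
  {α : ℝ | 0 ≤ α ∧ IsPosBlockMatrix (tEntry T (α : ℂ))}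

lemma toeplitzModulus_eq (T : Fin d → H →L[ℂ] H) :
    toeplitzModulus T = sInf (toepSet T) := rfl

lemma toepSet_bddBelow (T : Fin d → H →L[ℂ] H) : BddBelow (toepSet T) :=
  ⟨0, fun _ hx => hx.1⟩

lemma big_mem_toepSet (T : Fin d → H →L[ℂ] H) :
    (((d:ℝ)+1) * ∑ k, ‖T k‖) ∈ toepSet T :=
  ⟨mul_nonneg (by positivity) (Finset.sum_nonneg fun _ _ => norm_nonneg _), isPos_big T⟩

lemma toepSet_nonempty (T : Fin d → H →L[ℂ] H) : (toepSet T).Nonempty :=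
  ⟨_, big_mem_toepSet T⟩

lemma toeplitzModulus_nonneg (T : Fin d → H →L[ℂ] H) : 0 ≤ toeplitzModulus T :=
  Real.sInf_nonneg fun _ hx => hx.1

lemma norm_le_toeplitzModulus (T : Fin d → H →L[ℂ] H) (k : Fin d) :
    ‖T k‖ ≤ toeplitzModulus T := by
  rw [toeplitzModulus_eq]
  exact le_csInf (toepSet_nonempty T) fun α hα => norm_le_of_isPos T hα.1 hα.2 k

lemma toeplitzModulus_zero : toeplitzModulus (fun _ : Fin d => (0 : H →L[ℂ] H)) = 0 := by
  refine le_antisymm ?_ (toeplitzModulus_nonneg _)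
  rw [toeplitzModulus_eq]
  refine csInf_le (toepSet_bddBelow _) ?_
  have h := big_mem_toepSet (fun _ : Fin d => (0 : H →L[ℂ] H))
  have e : (((d:ℝ)+1) * ∑ _k : Fin d, ‖(0 : H →L[ℂ] H)‖) = 0 := by simp
  rwa [e] at h

lemma toeplitzModulus_add (S T : Fin d → H →L[ℂ] H) :
    toeplitzModulus (fun k => S k + T k) ≤ toeplitzModulus S + toeplitzModulus T := by
  have key : ∀ α ∈ toepSet S, ∀ β ∈ toepSet T,
      toeplitzModulus (fun k => S k + T k) ≤ α + β := by
    intro α hα β hβ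
    rw [toeplitzModulus_eq]
    refine csInf_le (toepSet_bddBelow _) ⟨add_nonneg hα.1 hβ.1, fun x => ?_⟩
    calc (0:ℂ) ≤ (∑ i, ∑ j, (inner ℂ (tEntry S (α:ℂ) i j (x j)) (x i) : ℂ))
          + (∑ i, ∑ j, (inner ℂ (tEntry T (β:ℂ) i j (x j)) (x i) : ℂ)) :=
        add_nonneg (hα.2 x) (hβ.2 x)
      _ = ∑ i, ∑ j,
          (inner ℂ (tEntry (fun k => S k + T k) (((α + β : ℝ)) : ℂ) i j (x j)) (x i) : ℂ) := by
        rw [← Finset.sum_add_distrib]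
        refine Finset.sum_congr rfl fun i _ => ?_
        rw [← Finset.sum_add_distrib]
        refine Finset.sum_congr rfl fun j _ => ?_
        rw [tEntry_add S T α β i j, ContinuousLinearMap.add_apply, inner_add_left]
  have h1 : ∀ β ∈ toepSet T,
      toeplitzModulus (fun k => S k + T k) - β ≤ toeplitzModulus S := by
    intro β hβ
    rw [toeplitzModulus_eq S]
    exact le_csInf (toepSet_nonempty S) fun α hα => by linarith [key α hα β hβ]
  have h2 : toeplitzModulus (fun k => S k + T k) - toeplitzModulus S ≤ toeplitzModulus T := by
    rw [toeplitzModulus_eq T]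
    exact le_csInf (toepSet_nonempty T) fun β hβ => by linarith [h1 β hβ]
  linarith

lemma toeplitzModulus_eq_zero {S T : Fin d → H →L[ℂ] H}
    (h1 : toeplitzModulus (fun k => S k - T k) = 0)
    (h2 : toeplitzModulus (fun k => T k - S k) = 0) : S = T := by
  funext k
  have := norm_le_toeplitzModulus (fun k => S k - T k) k
  rw [h1] at this
  have hz : ‖S k - T k‖ = 0 := le_antisymm this (norm_nonneg _)
  rw [norm_eq_zero, sub_eq_zero] at hz
  exact hz

end Aux2

/-- `D^ρ` is a metric on `B(H)^d`: it is nonnegative, vanishes exactly when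
`S = T`, is symmetric, and satisfies the triangle inequality. -/
theorem toeplitzDist_is_metric (d : ℕ) :
    (∀ S T : Fin d → H →L[ℂ] H, 0 ≤ toeplitzDist S T) ∧
    (∀ S T : Fin d → H →L[ℂ] H, toeplitzDist S T = 0 ↔ S = T) ∧
    (∀ S T : Fin d → H →L[ℂ] H, toeplitzDist S T = toeplitzDist T S) ∧
    (∀ S T R : Fin d → H →L[ℂ] H,
      toeplitzDist S R ≤ toeplitzDist S T + toeplitzDist T R) := by
  refine ⟨fun S T => ?_, fun S T => ⟨fun h => ?_, fun h => ?_⟩, fun S T => ?_, fun S T R => ?_⟩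
  · have h1 := toeplitzModulus_nonneg (fun k => S k - T k)
    have h2 := toeplitzModulus_nonneg (fun k => T k - S k)
    unfold toeplitzDist
    linarith
  · have h1 := toeplitzModulus_nonneg (fun k => S k - T k)
    have h2 := toeplitzModulus_nonneg (fun k => T k - S k)
    unfold toeplitzDist at h
    exact toeplitzModulus_eq_zero (by linarith) (by linarith)
  · subst h
    unfold toeplitzDist
    rw [show (fun k => S k - S k) = (fun _ : Fin d => (0 : H →L[ℂ] H)) from
      funext fun k => sub_self _, toeplitzModulus_zero]
    norm_num
  · unfold toeplitzDist
    ring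
  · have e1 : (fun k => S k - R k) = fun k => (S k - T k) + (T k - R k) :=
      funext fun k => by abel
    have e2 : (fun k => R k - S k) = fun k => (R k - T k) + (T k - S k) :=
      funext fun k => by abel
    have g1 : toeplitzModulus (fun k => S k - R k)
        ≤ toeplitzModulus (fun k => S k - T k) + toeplitzModulus (fun k => T k - R k) := by
      rw [e1]; exact toeplitzModulus_add _ _
    have g2 : toeplitzModulus (fun k => R k - S k)
        ≤ toeplitzModulus (fun k => R k - T k) + toeplitzModulus (fun k => T k - S k) := by
      rw [e2]; exact toeplitzModulus_add _ _
    unfold toeplitzDist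
    linarith
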